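/- arXiv:2106.10424 — 6 statements merged into one kernel-verified Lean document; each statement's English description precedes it below -/
import Mathlib

section
/- For any episodic tabular MDP and any two policies π and π′: (i) for every h ∈ {1,…,H}, ‖d^π_h − d^{π′}_h‖₁ ≤ Σ_{ℓ=1}^{h−1} Σ_s d^{π′}_ℓ(s) · ‖π_ℓ(·|s) − π′_ℓ(·|s)‖₁ (the empty sum being 0 when h = 1); and (ii) for every h ∈ {1,…,H}, ‖P^π_h − P^{π′}_h‖₁ ≤ ‖d^π_h − d^{π′}_h‖₁ + Σ_s d^{π′}_h(s) · ‖π_h(·|s) − π′_h(·|s)‖₁. Here ‖·‖₁ denotes the sum of absolute values of all coordinates. -/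
open Finset

/-- State distribution `d^π_h` of a policy `π` in an episodic tabular MDP
(time steps are 0-indexed: `stateDist ρ P π 0 = ρ`). -/
noncomputable def stateDist {S A : Type*} [Fintype S] [Fintype A] (ρ : S → ℝ)
    (P : ℕ → S → A → S → ℝ) (π : ℕ → S → A → ℝ) : ℕ → S → ℝ
  | 0 => ρ
  | h + 1 => fun s' => ∑ s : S, ∑ a : A, stateDist ρ P π h s * π h s a * P h s a s'

/-- State-action distribution `P^π_h(s,a) = d^π_h(s) π_h(a|s)`. -/
noncomputable def saDist {S A : Type*} [Fintype S] [Fintype A] (ρ : S → ℝ)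
    (P : ℕ → S → A → S → ℝ) (π : ℕ → S → A → ℝ) (h : ℕ) (s : S) (a : A) : ℝ :=
  stateDist ρ P π h s * π h s a

/-- Policy value `V^π = Σ_{h<H} Σ_{(s,a)} P^π_h(s,a) r_h(s,a)`. -/
noncomputable def policyValue {S A : Type*} [Fintype S] [Fintype A] (ρ : S → ℝ)
    (P : ℕ → S → A → S → ℝ) (π : ℕ → S → A → ℝ) (r : ℕ → S → A → ℝ) (H : ℕ) : ℝ :=
  ∑ h ∈ Finset.range H, ∑ s : S, ∑ a : A, saDist ρ P π h s a * r h s a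

/-- `π` is a (Markovian, non-stationary) policy. -/
def IsPolicy {S A : Type*} [Fintype A] (π : ℕ → S → A → ℝ) : Prop :=
  ∀ h s, (∀ a, 0 ≤ π h s a) ∧ (∑ a : A, π h s a) = 1

/-- `P` is a transition function. -/
def IsTransition {S A : Type*} [Fintype S] (P : ℕ → S → A → S → ℝ) : Prop :=
  ∀ h s a, (∀ s', 0 ≤ P h s a s') ∧ (∑ s' : S, P h s a s') = 1

/-- `ρ` is an initial state distribution. -/
def IsInitDist {S : Type*} [Fintype S] (ρ : S → ℝ) : Prop :=
  (∀ s, 0 ≤ ρ s) ∧ (∑ s : S, ρ s) = 1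

/-- Rewards take values in `[0,1]`. -/
def IsReward {S A : Type*} (r : ℕ → S → A → ℝ) : Prop :=
  ∀ h s a, 0 ≤ r h s a ∧ r h s a ≤ 1

/-- The VAIL state-action distribution matching objective
`L(π) = Σ_{h<H} Σ_{(s,a)} |P^π_h(s,a) − Q_h(s,a)|`. -/
noncomputable def vailLoss {S A : Type*} [Fintype S] [Fintype A] (ρ : S → ℝ)
    (P : ℕ → S → A → S → ℝ) (π : ℕ → S → A → ℝ) (Q : ℕ → S → A → ℝ) (H : ℕ) : ℝ :=
  ∑ h ∈ Finset.range H, ∑ s : S, ∑ a : A, |saDist ρ P π h s a - Q h s a|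

/-!
Pushing a signed measure through a stochastic kernel does not increase its ℓ₁-norm, and
`d π − d' π' = (d − d') π + d' (π − π')`. Since `d^π_{h+1}` is the push-forward of `P^π_h`
through `P_h`, this gives `‖d^π_{h+1} − d^{π'}_{h+1}‖₁ ≤ ‖P^π_h − P^{π'}_h‖₁
≤ ‖d^π_h − d^{π'}_h‖₁ + Σ_s d^{π'}_h(s) ‖π_h(·|s) − π'_h(·|s)‖₁`, and (i) follows by induction.
-/

theorem sum_abs_sum_mul_le_sum_abs {α β : Type*} [Fintype α] [Fintype β]
    (f : α → ℝ) (K : α → β → ℝ) (hK : ∀ a b, 0 ≤ K a b) (hK1 : ∀ a, ∑ b, K a b = 1) :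
    ∑ b, |∑ a, f a * K a b| ≤ ∑ a, |f a| :=
  calc ∑ b, |∑ a, f a * K a b|
      ≤ ∑ b, ∑ a, |f a| * K a b := by
        gcongr with b
        refine (abs_sum_le_sum_abs _ _).trans_eq (sum_congr rfl fun a _ => ?_)
        rw [abs_mul, abs_of_nonneg (hK a b)]
    _ = ∑ a, |f a| := by
        rw [sum_comm]
        simp only [← mul_sum, hK1, mul_one]

theorem sum_abs_mul_sub_mul_le {S A : Type*} [Fintype S] [Fintype A]
    (d d' : S → ℝ) (p p' : S → A → ℝ)
    (hd' : ∀ s, 0 ≤ d' s) (hp : ∀ s a, 0 ≤ p s a) (hp1 : ∀ s, ∑ a, p s a = 1) :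
    ∑ s, ∑ a, |d s * p s a - d' s * p' s a|
      ≤ (∑ s, |d s - d' s|) + ∑ s, d' s * ∑ a, |p s a - p' s a| := by
  rw [← sum_add_distrib]
  gcongr with s
  calc ∑ a, |d s * p s a - d' s * p' s a|
      ≤ ∑ a, (|d s - d' s| * p s a + d' s * |p s a - p' s a|) := by
        gcongr with a
        rw [show d s * p s a - d' s * p' s a
            = (d s - d' s) * p s a + d' s * (p s a - p' s a) by ring]
        refine (abs_add_le _ _).trans_eq ?_
        rw [abs_mul, abs_mul, abs_of_nonneg (hp s a), abs_of_nonneg (hd' s)]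
    _ = |d s - d' s| + d' s * ∑ a, |p s a - p' s a| := by
        rw [sum_add_distrib, ← mul_sum, ← mul_sum, hp1 s, mul_one]

section stateDist

variable {S A : Type*} [Fintype S] [Fintype A] {ρ : S → ℝ} {P : ℕ → S → A → S → ℝ}
  {π π' : ℕ → S → A → ℝ}

theorem stateDist_nonneg (hρ : ∀ s, 0 ≤ ρ s) (hP : ∀ h s a s', 0 ≤ P h s a s')
    (hπ : ∀ h s a, 0 ≤ π h s a) (h : ℕ) (s : S) : 0 ≤ stateDist ρ P π h s := by
  induction h generalizing s with
  | zero => exact hρ s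
  | succ h ih =>
    exact sum_nonneg fun s _ => sum_nonneg fun a _ =>
      mul_nonneg (mul_nonneg (ih s) (hπ h s a)) (hP h s a _)

theorem sum_abs_stateDist_succ_sub_le (hP : IsTransition P) (h : ℕ) :
    ∑ s, |stateDist ρ P π (h + 1) s - stateDist ρ P π' (h + 1) s|
      ≤ ∑ s, ∑ a, |saDist ρ P π h s a - saDist ρ P π' h s a| := by
  have hpush : ∀ s', stateDist ρ P π (h + 1) s' - stateDist ρ P π' (h + 1) s'
      = ∑ x : S × A, (saDist ρ P π h x.1 x.2 - saDist ρ P π' h x.1 x.2) * P h x.1 x.2 s' := by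
    intro s'
    simp only [stateDist, saDist, Fintype.sum_prod_type, ← sum_sub_distrib, sub_mul]
  rw [← Fintype.sum_prod_type' (fun s a => |saDist ρ P π h s a - saDist ρ P π' h s a|)]
  simp only [hpush]
  exact sum_abs_sum_mul_le_sum_abs _ _ (fun x => (hP h x.1 x.2).1) (fun x => (hP h x.1 x.2).2)

theorem sum_abs_saDist_sub_le (hρ : IsInitDist ρ) (hP : IsTransition P) (hπ : IsPolicy π)
    (hπ' : IsPolicy π') (h : ℕ) :
    ∑ s, ∑ a, |saDist ρ P π h s a - saDist ρ P π' h s a|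
      ≤ (∑ s, |stateDist ρ P π h s - stateDist ρ P π' h s|)
        + ∑ s, stateDist ρ P π' h s * ∑ a, |π h s a - π' h s a| :=
  sum_abs_mul_sub_mul_le _ _ _ _
    (stateDist_nonneg hρ.1 (fun h s a => (hP h s a).1) (fun h s => (hπ' h s).1) h)
    (fun s => (hπ h s).1) (fun s => (hπ h s).2)

theorem sum_abs_stateDist_sub_le (hρ : IsInitDist ρ) (hP : IsTransition P) (hπ : IsPolicy π)
    (hπ' : IsPolicy π') (h : ℕ) :
    ∑ s, |stateDist ρ P π h s - stateDist ρ P π' h s|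
      ≤ ∑ ℓ ∈ range h, ∑ s, stateDist ρ P π' ℓ s * ∑ a, |π ℓ s a - π' ℓ s a| := by
  induction h with
  | zero => simp [stateDist]
  | succ h ih =>
    rw [sum_range_succ]
    calc _ ≤ _ := sum_abs_stateDist_succ_sub_le hP h
      _ ≤ _ := sum_abs_saDist_sub_le hρ hP hπ hπ' h
      _ ≤ _ := by gcongr

end stateDist

theorem stateDist_saDist_l1_bounds_general {S A : Type*} [Fintype S] [Fintype A]
    (ρ : S → ℝ) (P : ℕ → S → A → S → ℝ)
    (π π' : ℕ → S → A → ℝ) (H : ℕ)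
    (hρ : IsInitDist ρ) (hP : IsTransition P)
    (hπ : IsPolicy π) (hπ' : IsPolicy π') :
    (∀ h < H,
      (∑ s : S, |stateDist ρ P π h s - stateDist ρ P π' h s|)
        ≤ ∑ ℓ ∈ Finset.range h, ∑ s : S,
            stateDist ρ P π' ℓ s * ∑ a : A, |π ℓ s a - π' ℓ s a|) ∧
    (∀ h < H,
      (∑ s : S, ∑ a : A, |saDist ρ P π h s a - saDist ρ P π' h s a|)
        ≤ (∑ s : S, |stateDist ρ P π h s - stateDist ρ P π' h s|)
          + ∑ s : S, stateDist ρ P π' h s * ∑ a : A, |π h s a - π' h s a|) :=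
  ⟨fun h _ => sum_abs_stateDist_sub_le hρ hP hπ hπ' h,
    fun h _ => sum_abs_saDist_sub_le hρ hP hπ hπ' h⟩

/-- for any episodic tabular MDP and any two policies `π`, `π'`:
(i) the ℓ₁-distance between state distributions at time `h` is bounded by the accumulated
ℓ₁ policy disagreement weighted by `d^{π'}_ℓ` over earlier times, and
(ii) the ℓ₁-distance between state-action distributions at time `h` is bounded by the
state-distribution distance plus the `d^{π'}_h`-weighted policy disagreement at time `h`.
(Time steps are 0-indexed: `h` here corresponds to `h+1` in the 1-indexed statement.) -/
theorem stateDist_saDist_l1_bounds {S A : Type*} [Fintype S] [Fintype A]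
    [Nonempty S] [Nonempty A]
    (ρ : S → ℝ) (P : ℕ → S → A → S → ℝ) (r : ℕ → S → A → ℝ)
    (π π' : ℕ → S → A → ℝ) (H : ℕ) (hH : 1 ≤ H)
    (hρ : IsInitDist ρ) (hP : IsTransition P) (hr : IsReward r)
    (hπ : IsPolicy π) (hπ' : IsPolicy π') :
    (∀ h < H,
      (∑ s : S, |stateDist ρ P π h s - stateDist ρ P π' h s|)
        ≤ ∑ ℓ ∈ Finset.range h, ∑ s : S,
            stateDist ρ P π' ℓ s * ∑ a : A, |π ℓ s a - π' ℓ s a|) ∧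
    (∀ h < H,
      (∑ s : S, ∑ a : A, |saDist ρ P π h s a - saDist ρ P π' h s a|)
        ≤ (∑ s : S, |stateDist ρ P π h s - stateDist ρ P π' h s|)
          + ∑ s : S, stateDist ρ P π' h s * ∑ a : A, |π h s a - π' h s a|) :=
  stateDist_saDist_l1_bounds_general ρ P π π' H hρ hP hπ hπ'
end

section
/- Let M be any episodic tabular MDP, let π^E be any policy, and let Q_h : S × A → ℝ (h = 1,…,H) be arbitrary estimates. If π* is any global minimizer over all policies of the VAIL objective L(π) = Σ_{h=1}^H Σ_{(s,a)} |P^π_h(s,a) − Q_h(s,a)|, then |V^{π^E} − V^{π*}| ≤ 2 Σ_{h=1}^H Σ_{(s,a)} |P^{π^E}_h(s,a) − Q_h(s,a)|. -/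
open Finset

/-- for any episodic tabular MDP, expert policy `πE` and arbitrary estimates `Q`,
any global minimizer `πstar` of the VAIL objective over all policies satisfies
`|V^{πE} − V^{πstar}| ≤ 2 Σ_{h} Σ_{(s,a)} |P^{πE}_h(s,a) − Q_h(s,a)|`. -/
theorem vail_minimizer_value_gap_bound {S A : Type*} [Fintype S] [Fintype A]
    [Nonempty S] [Nonempty A]
    (ρ : S → ℝ) (P : ℕ → S → A → S → ℝ) (r : ℕ → S → A → ℝ)
    (πE πstar : ℕ → S → A → ℝ) (Q : ℕ → S → A → ℝ) (H : ℕ) (hH : 1 ≤ H)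
    (hρ : IsInitDist ρ) (hP : IsTransition P) (hr : IsReward r)
    (hE : IsPolicy πE) (hstar : IsPolicy πstar)
    (hmin : ∀ π, IsPolicy π → vailLoss ρ P πstar Q H ≤ vailLoss ρ P π Q H) :
    |policyValue ρ P πE r H - policyValue ρ P πstar r H|
      ≤ 2 * ∑ h ∈ Finset.range H, ∑ s : S, ∑ a : A, |saDist ρ P πE h s a - Q h s a| := by

  have key : |policyValue ρ P πE r H - policyValue ρ P πstar r H|
      ≤ ∑ h ∈ Finset.range H, ∑ s : S, ∑ a : A,
        |saDist ρ P πE h s a - saDist ρ P πstar h s a| := by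
    unfold policyValue
    rw [← Finset.sum_sub_distrib]
    refine (Finset.abs_sum_le_sum_abs _ _).trans (Finset.sum_le_sum fun h _ => ?_)
    rw [← Finset.sum_sub_distrib]
    refine (Finset.abs_sum_le_sum_abs _ _).trans (Finset.sum_le_sum fun s _ => ?_)
    rw [← Finset.sum_sub_distrib]
    refine (Finset.abs_sum_le_sum_abs _ _).trans (Finset.sum_le_sum fun a _ => ?_)
    rw [← sub_mul, abs_mul]
    have := (hr h s a)
    calc |saDist ρ P πE h s a - saDist ρ P πstar h s a| * |r h s a|
        ≤ |saDist ρ P πE h s a - saDist ρ P πstar h s a| * 1 := by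
          apply mul_le_mul_of_nonneg_left _ (abs_nonneg _)
          rw [abs_of_nonneg this.1]; exact this.2
      _ = _ := mul_one _
  have tri : ∑ h ∈ Finset.range H, ∑ s : S, ∑ a : A,
        |saDist ρ P πE h s a - saDist ρ P πstar h s a|
      ≤ vailLoss ρ P πE Q H + vailLoss ρ P πstar Q H := by
    unfold vailLoss
    rw [← Finset.sum_add_distrib]
    refine Finset.sum_le_sum fun h _ => ?_
    rw [← Finset.sum_add_distrib]
    refine Finset.sum_le_sum fun s _ => ?_
    rw [← Finset.sum_add_distrib]
    refine Finset.sum_le_sum fun a _ => ?_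
    calc |saDist ρ P πE h s a - saDist ρ P πstar h s a|
        = |(saDist ρ P πE h s a - Q h s a) - (saDist ρ P πstar h s a - Q h s a)| := by
          ring_nf
      _ ≤ _ := abs_sub _ _
  have hmin' := hmin πE hE
  have : |policyValue ρ P πE r H - policyValue ρ P πstar r H|
      ≤ vailLoss ρ P πE Q H + vailLoss ρ P πE Q H := by
    linarith
  calc |policyValue ρ P πE r H - policyValue ρ P πstar r H|
      ≤ vailLoss ρ P πE Q H + vailLoss ρ P πE Q H := this
    _ = 2 * vailLoss ρ P πE Q H := by ring
    _ = _ := by rfl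
end

section
/- Let M satisfy the Standard Imitation assumption with ρ(s) > 0 for all s ∈ S, and let P̂_h : S × A → ℝ satisfy P̂_h ≥ 0, P̂_h(s,a) = 0 for a ≠ a¹, and Σ_s P̂_h(s,a¹) = 1 for each h. For each h let S¹_h = {s : P̂_h(s,a¹) < ρ(s)}. Let π be a random policy whose coordinates π_h(a¹|s) are independent, drawn uniformly from the interval [P̂_h(s,a¹)/ρ(s), 1] when s ∈ S¹_h, and equal to 1 when s ∉ S¹_h (with the remaining probability mass on non-a¹ actions assigned in any fixed way). Then V^{π^E} − E[V^{π}] = (1/4) Σ_{h=1}^H Σ_{s∈S} |P̂_h(s,a¹) − ρ(s)|. -/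
/-! Under Standard Imitation every state is absorbing, so every policy keeps the state
distribution at `ρ` and `V^π = Σ_h Σ_s ρ(s) π_h(a¹|s)`. By linearity of expectation the gap is
`Σ_h Σ_s ρ(s) (1 - E π_h(a¹|s))`; a coordinate uniform on `[q, 1]` has mean `(1 + q) / 2`, so a state
with `Q < ρ` contributes `(ρ - Q) / 2` and the others nothing. As `Q_h(·, a¹)` and `ρ` have the same
total mass, `Σ_s (ρ - Q)⁺ = ½ Σ_s |Q - ρ|`. -/

open Finset

/-- The Standard Imitation assumption: every state is absorbing (identical transitions for all
actions), the expert action `a1` has reward 1 and all other actions have reward 0. -/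
def StandardImitation {S A : Type*} [DecidableEq S]
    (P : ℕ → S → A → S → ℝ) (r : ℕ → S → A → ℝ) (a1 : A) : Prop :=
  (∀ h s a s', P h s a s' = if s' = s then (1 : ℝ) else 0) ∧
  (∀ h s, r h s a1 = 1) ∧
  (∀ h (s : S) (a : A), a ≠ a1 → r h s a = 0)

open MeasureTheory

section StandardImitation

variable {S A : Type*} [Fintype S] [Fintype A] [DecidableEq S] {ρ : S → ℝ}
  {P : ℕ → S → A → S → ℝ} {r : ℕ → S → A → ℝ} {a1 : A}

lemma stateDist_eq_of_absorbing {π : ℕ → S → A → ℝ}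
    (hP : ∀ h s a s', P h s a s' = if s' = s then (1 : ℝ) else 0)
    (hπ : ∀ h s, ∑ a : A, π h s a = 1) (h : ℕ) : stateDist ρ P π h = ρ := by
  induction h with
  | zero => rfl
  | succ n ih =>
    funext s'
    simp only [stateDist, ih, hP, mul_ite, mul_one, mul_zero, sum_ite_eq, mem_univ, if_true,
      ← mul_sum, hπ, ← sum_comm (γ := A)]

lemma policyValue_eq_of_standardImitation {π : ℕ → S → A → ℝ}
    (hSI : StandardImitation P r a1) (hπ : IsPolicy π) (H : ℕ) :
    policyValue ρ P π r H = ∑ h ∈ range H, ∑ s : S, ρ s * π h s a1 := by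
  refine sum_congr rfl fun h _ => sum_congr rfl fun s _ => ?_
  rw [sum_eq_single a1 (fun a _ ha => by rw [hSI.2.2 h s a ha, mul_zero]) (by simp),
    saDist, stateDist_eq_of_absorbing hSI.1 (fun h s => (hπ h s).2), hSI.2.1, mul_one]

lemma integral_policyValue_eq_of_standardImitation {Ω : Type*} [MeasurableSpace Ω]
    {μ : Measure Ω} {π : Ω → ℕ → S → A → ℝ} {H : ℕ}
    (hSI : StandardImitation P r a1) (hπ : ∀ ω, IsPolicy (π ω))
    (hint : ∀ h < H, ∀ s, Integrable (fun ω => π ω h s a1) μ) :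
    ∫ ω, policyValue ρ P (π ω) r H ∂μ = ∑ h ∈ range H, ∑ s : S, ρ s * ∫ ω, π ω h s a1 ∂μ := by
  have hint' : ∀ h ∈ range H, ∀ s, Integrable (fun ω => ρ s * π ω h s a1) μ :=
    fun h hh s => (hint h (mem_range.1 hh) s).const_mul _
  simp_rw [policyValue_eq_of_standardImitation hSI (hπ _)]
  rw [integral_finsetSum _ fun h hh => integrable_finsetSum _ fun s _ => hint' h hh s]
  refine sum_congr rfl fun h hh => ?_
  rw [integral_finsetSum _ fun s _ => hint' h hh s]
  simp only [integral_const_mul]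

end StandardImitation

namespace MeasureTheory.pdf

variable {Ω : Type*} [MeasurableSpace Ω] {μ : Measure Ω} {X : Ω → ℝ} {a b : ℝ}

lemma isUniform_Icc_iff :
    IsUniform X (Set.Icc a b) μ ↔
      μ.map X = (ENNReal.ofReal (b - a))⁻¹ • volume.restrict (Set.Icc a b) := by
  rw [IsUniform, ProbabilityTheory.cond, Real.volume_Icc]

namespace IsUniform

lemma integrable_of_Icc (hab : a < b) (hX : IsUniform X (Set.Icc a b) μ) : Integrable X μ := by
  have hX_meas := hX.aemeasurable (by simp [hab]) (by simp)
  have hid : Integrable id (μ.map X) := by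
    rw [hX, ProbabilityTheory.cond]
    refine (continuous_id.integrableOn_Icc : IntegrableOn id (Set.Icc a b)).smul_measure ?_
    simp [hab]
  exact (integrable_map_measure aestronglyMeasurable_id hX_meas).1 hid

lemma integral_eq_midpoint (hab : a < b) (hX : IsUniform X (Set.Icc a b) μ) :
    ∫ ω, X ω ∂μ = (a + b) / 2 := by
  rw [hX.integral_eq, Real.volume_Icc, integral_Icc_eq_integral_Ioc,
    ← intervalIntegral.integral_of_le hab.le, integral_id, ENNReal.toReal_inv,
    ENNReal.toReal_ofReal (sub_nonneg.2 hab.le)]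
  field_simp [(sub_pos.2 hab).ne']
  ring

end IsUniform

end MeasureTheory.pdf

section UniformOrOne

open pdf

variable {Ω : Type*} [MeasurableSpace Ω] {μ : Measure Ω} [IsProbabilityMeasure μ] {X : Ω → ℝ}
  {c q : ℝ}

lemma integrable_of_isUniform_or_eq_one (hc : 0 < c) (hone : c ≤ q → ∀ ω, X ω = 1)
    (hunif : q < c → IsUniform X (Set.Icc (q / c) 1) μ) : Integrable X μ := by
  rcases lt_or_ge q c with hq | hq
  · exact (hunif hq).integrable_of_Icc ((div_lt_one hc).2 hq)
  · simp only [funext (hone hq), integrable_const]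

lemma sub_mul_integral_of_isUniform_or_eq_one (hc : 0 < c) (hone : c ≤ q → ∀ ω, X ω = 1)
    (hunif : q < c → IsUniform X (Set.Icc (q / c) 1) μ) :
    c - c * ∫ ω, X ω ∂μ = max (c - q) 0 / 2 := by
  rcases lt_or_ge q c with hq | hq
  · rw [(hunif hq).integral_eq_midpoint ((div_lt_one hc).2 hq), max_eq_left (sub_nonneg.2 hq.le)]
    field_simp
    ring
  · simp [hone hq, hq]

end UniformOrOne

lemma Finset.sum_max_sub_eq_half_sum_abs {ι : Type*} (t : Finset ι) {x y : ι → ℝ}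
    (hxy : ∑ i ∈ t, x i = ∑ i ∈ t, y i) :
    ∑ i ∈ t, max (y i - x i) 0 = 1 / 2 * ∑ i ∈ t, |x i - y i| := by
  have habs : ∀ i, |x i - y i| = (x i - y i) + 2 * max (y i - x i) 0 := fun i => by
    rcases le_total (x i) (y i) with hi | hi
    · rw [abs_of_nonpos (by linarith), max_eq_left (by linarith)]; ring
    · rw [abs_of_nonneg (by linarith), max_eq_right (by linarith)]; ring
  simp only [habs, sum_add_distrib, sum_sub_distrib, hxy, ← mul_sum]
  ring

open MeasureTheory ProbabilityTheory in
theorem standard_imitation_random_minimizer_gap_general {S A : Type*} [Fintype S] [Fintype A]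
    [DecidableEq S]
    {Ω : Type*} [MeasurableSpace Ω] (μ : Measure Ω) [IsProbabilityMeasure μ]
    (ρ : S → ℝ) (P : ℕ → S → A → S → ℝ) (r : ℕ → S → A → ℝ)
    (πE : ℕ → S → A → ℝ) (a1 : A) (Q : ℕ → S → A → ℝ) (H : ℕ)
    (hρ : IsInitDist ρ) (hE : IsPolicy πE)
    (hSI : StandardImitation P r a1)
    (hEa : ∀ h s, πE h s a1 = 1)
    (hρpos : ∀ s, 0 < ρ s)
    (hQ1 : ∀ h < H, (∑ s : S, Q h s a1) = 1)
    (π : Ω → ℕ → S → A → ℝ)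
    (hpol : ∀ ω, IsPolicy (π ω))
    (hone : ∀ h < H, ∀ s, ρ s ≤ Q h s a1 → ∀ ω, π ω h s a1 = 1)
    (hunif : ∀ h < H, ∀ s, Q h s a1 < ρ s →
        Measure.map (fun ω => π ω h s a1) μ
          = (ENNReal.ofReal (1 - Q h s a1 / ρ s))⁻¹ •
              (volume.restrict (Set.Icc (Q h s a1 / ρ s) 1))) :
    policyValue ρ P πE r H - ∫ ω, policyValue ρ P (π ω) r H ∂μ
      = (1 / 4) * ∑ h ∈ Finset.range H, ∑ s : S, |Q h s a1 - ρ s| := by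
  have hunif' : ∀ h < H, ∀ s, Q h s a1 < ρ s →
      pdf.IsUniform (fun ω => π ω h s a1) (Set.Icc (Q h s a1 / ρ s) 1) μ :=
    fun h hh s hs => pdf.isUniform_Icc_iff.2 (hunif h hh s hs)
  have hint : ∀ h < H, ∀ s, Integrable (fun ω => π ω h s a1) μ := fun h hh s =>
    integrable_of_isUniform_or_eq_one (hρpos s) (hone h hh s) (hunif' h hh s)
  rw [policyValue_eq_of_standardImitation hSI hE,
    integral_policyValue_eq_of_standardImitation hSI hpol hint, ← sum_sub_distrib, mul_sum]
  refine sum_congr rfl fun h hh => ?_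
  have hhH := mem_range.1 hh
  have hgap : ∀ s, ρ s * πE h s a1 - ρ s * ∫ ω, π ω h s a1 ∂μ = max (ρ s - Q h s a1) 0 / 2 :=
    fun s => by
      rw [hEa, mul_one]
      exact sub_mul_integral_of_isUniform_or_eq_one (hρpos s) (hone h hhH s) (hunif' h hhH s)
  rw [← sum_sub_distrib, sum_congr rfl fun s _ => hgap s, ← sum_div,
    sum_max_sub_eq_half_sum_abs _ (by rw [hQ1 h hhH, hρ.2])]
  ring

open MeasureTheory ProbabilityTheory in
/-- on any Standard Imitation instance, consider a random policy `π` whose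
coordinates `π_h(a¹|s)` are independent, uniform on `[Q_h(s,a¹)/ρ(s), 1]` for states with
`Q_h(s,a¹) < ρ(s)`, and equal to `1` otherwise.  Then
`V^{πE} − E[V^{π}] = (1/4) Σ_h Σ_s |Q_h(s,a¹) − ρ(s)|`. -/
theorem standard_imitation_random_minimizer_gap {S A : Type*} [Fintype S] [Fintype A]
    [Nonempty S] [Nonempty A] [DecidableEq S]
    {Ω : Type*} [MeasurableSpace Ω] (μ : Measure Ω) [IsProbabilityMeasure μ]
    (ρ : S → ℝ) (P : ℕ → S → A → S → ℝ) (r : ℕ → S → A → ℝ)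
    (πE : ℕ → S → A → ℝ) (a1 : A) (Q : ℕ → S → A → ℝ) (H : ℕ) (hH : 1 ≤ H)
    (hρ : IsInitDist ρ) (hP : IsTransition P) (hr : IsReward r) (hE : IsPolicy πE)
    (hSI : StandardImitation P r a1)
    (hEa : ∀ h s, πE h s a1 = 1)
    (hρpos : ∀ s, 0 < ρ s)
    (hQ0 : ∀ h < H, ∀ s a, 0 ≤ Q h s a)
    (hQz : ∀ h < H, ∀ (s : S) (a : A), a ≠ a1 → Q h s a = 0)
    (hQ1 : ∀ h < H, (∑ s : S, Q h s a1) = 1)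
    (π : Ω → ℕ → S → A → ℝ)
    (hpol : ∀ ω, IsPolicy (π ω))
    (hone : ∀ h < H, ∀ s, ρ s ≤ Q h s a1 → ∀ ω, π ω h s a1 = 1)
    (hunif : ∀ h < H, ∀ s, Q h s a1 < ρ s →
        Measure.map (fun ω => π ω h s a1) μ
          = (ENNReal.ofReal (1 - Q h s a1 / ρ s))⁻¹ •
              (volume.restrict (Set.Icc (Q h s a1 / ρ s) 1)))
    (hindep : iIndepFun
        (fun (p : {q : ℕ × S // q.1 < H}) (ω : Ω) => π ω p.1.1 p.1.2 a1) μ) :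
    policyValue ρ P πE r H - ∫ ω, policyValue ρ P (π ω) r H ∂μ
      = (1 / 4) * ∑ h ∈ Finset.range H, ∑ s : S, |Q h s a1 - ρ s| :=
  standard_imitation_random_minimizer_gap_general μ ρ P r πE a1 Q H hρ hE hSI hEa hρpos hQ1 π hpol
    hone hunif
end

section
/- Let M be an episodic tabular MDP with deterministic transitions (for each h, s, a there is f_h(s,a) ∈ S with P_h(f_h(s,a)|s,a) = 1) and a deterministic expert policy π^E (with π^E_h(·|s) a point mass at e_h(s)). Let D be any finite nonempty collection of expert-generated trajectories, i.e., each trajectory (s_1,a_1,…,s_H,a_H) ∈ D satisfies a_h = e_h(s_h) and s_{h+1} = f_h(s_h, a_h) for all h. Then the behavioral cloning policy π^{BC} satisfies V^{π^E} − V^{π^{BC}} ≤ H · Σ_{s∈S} ρ(s) · 1{s ∉ S_1(D)}. -/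
open Finset

open Classical in
/-- The behavioral cloning policy computed from a dataset `D` of trajectories
(`e` is the expert action map): it copies the expert action on states visited at time `h`
in some trajectory of `D` and is uniform on non-visited states. -/
noncomputable def bcPolicyD {S A : Type*} [Fintype A]
    (e : ℕ → S → A) (D : Set (ℕ → S × A)) : ℕ → S → A → ℝ :=
  fun h s a =>
    if ∃ tr ∈ D, (tr h).1 = s then (if a = e h s then 1 else 0)
    else (1 : ℝ) / (Fintype.card A : ℝ)

/-- The state reached at time `h` by following the deterministic expert from initial state. -/
def expFlow {S A : Type*} (f : ℕ → S → A → S) (e : ℕ → S → A) : ℕ → S → S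
  | 0 => fun s => s
  | h + 1 => fun s => f h (expFlow f e h s) (e h (expFlow f e h s))


open Classical in
/-- for any episodic tabular MDP with deterministic transitions `f` and a
deterministic expert policy `e`, and any finite nonempty dataset `D` of expert-generated
trajectories, behavioral cloning satisfies
`V^{πE} − V^{πBC} ≤ H · Σ_s ρ(s) 1{s ∉ S_1(D)}`. -/
theorem bc_deterministic_missing_mass_gap {S A : Type*} [Fintype S] [Fintype A]
    [Nonempty S] [Nonempty A] [DecidableEq S] [DecidableEq A]
    (ρ : S → ℝ) (P : ℕ → S → A → S → ℝ) (r : ℕ → S → A → ℝ) (πE : ℕ → S → A → ℝ)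
    (H : ℕ) (hH : 1 ≤ H)
    (hρ : IsInitDist ρ) (hP : IsTransition P) (hr : IsReward r) (hE : IsPolicy πE)
    (f : ℕ → S → A → S) (hf : ∀ h s a s', P h s a s' = if s' = f h s a then (1 : ℝ) else 0)
    (e : ℕ → S → A) (he : ∀ h s a, πE h s a = if a = e h s then (1 : ℝ) else 0)
    (D : Set (ℕ → S × A)) (hDfin : D.Finite) (hDne : D.Nonempty)
    (hDexp : ∀ tr ∈ D, ∀ h, h < H → (tr h).2 = e h (tr h).1)
    (hDdyn : ∀ tr ∈ D, ∀ h, h + 1 < H → (tr (h + 1)).1 = f h (tr h).1 (tr h).2) :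
    policyValue ρ P πE r H - policyValue ρ P (bcPolicyD e D) r H
      ≤ H * ∑ s : S, ρ s * (if ∃ tr ∈ D, (tr 0).1 = s then 0 else 1) := by
  classical
  set g : ℕ → S → S := expFlow f e with hgdef
  have hg0 : ∀ s, g 0 s = s := fun s => rfl
  have hgs : ∀ h s, g (h + 1) s = f h (g h s) (e h (g h s)) := fun h s => rfl
  set cov : S → Prop := fun s0 => ∃ tr ∈ D, (tr 0).1 = s0 with hcovdef
  set m : ℕ → S → ℝ :=
    fun h s => ∑ s0 : S, ρ s0 * (if cov s0 ∧ s = g h s0 then 1 else 0) with hmdef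
  set u : ℕ → S → ℝ :=
    fun h s => ∑ s0 : S, ρ s0 * (if ¬ cov s0 ∧ s = g h s0 then 1 else 0) with hudef
  have hm_nonneg : ∀ h s, 0 ≤ m h s := by
    intro h s
    refine Finset.sum_nonneg fun s0 _ => mul_nonneg (hρ.1 s0) ?_
    split <;> norm_num
  have hu_nonneg : ∀ h s, 0 ≤ u h s := by
    intro h s
    refine Finset.sum_nonneg fun s0 _ => mul_nonneg (hρ.1 s0) ?_
    split <;> norm_num
  -- Fact A: trajectory states follow the expert flow
  have factA : ∀ tr ∈ D, ∀ h, h < H → (tr h).1 = g h (tr 0).1 := by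
    intro tr htr h
    induction h with
    | zero => intro _; rfl
    | succ h ih =>
      intro hlt
      have hh : h < H := Nat.lt_of_succ_lt hlt
      rw [hDdyn tr htr h hlt, hDexp tr htr h hh, ih hh, hgs]
  -- BC policy facts
  have hbc_nonneg : ∀ h s a, 0 ≤ bcPolicyD e D h s a := by
    intro h s a
    unfold bcPolicyD
    split_ifs <;> first
      | norm_num
      | exact div_nonneg zero_le_one (Nat.cast_nonneg _)
  have hbc_cov : ∀ h s, (∃ tr ∈ D, (tr h).1 = s) → bcPolicyD e D h s (e h s) = 1 := by
    intro h s hvis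
    unfold bcPolicyD
    rw [if_pos hvis, if_pos rfl]
  -- BC state distribution is nonnegative
  have hd_nonneg : ∀ h s, 0 ≤ stateDist ρ P (bcPolicyD e D) h s := by
    intro h
    induction h with
    | zero => exact hρ.1
    | succ h ih =>
      intro s'
      refine Finset.sum_nonneg fun s _ => Finset.sum_nonneg fun a _ => ?_
      exact mul_nonneg (mul_nonneg (ih s) (hbc_nonneg h s a)) ((hP h s a).1 s')
  -- Expert state distribution formula
  have factE : ∀ h s, stateDist ρ P πE h s = ∑ s0 : S, ρ s0 * (if s = g h s0 then 1 else 0) := by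
    intro h
    induction h with
    | zero =>
      intro s
      simp [stateDist, hg0, mul_ite, Finset.sum_ite_eq]
    | succ h ih =>
      intro s'
      show (∑ s : S, ∑ a : A, stateDist ρ P πE h s * πE h s a * P h s a s') = _
      have step1 : ∀ s : S, (∑ a : A, stateDist ρ P πE h s * πE h s a * P h s a s')
          = stateDist ρ P πE h s * (if s' = f h s (e h s) then 1 else 0) := by
        intro s
        rw [Finset.sum_eq_single (e h s)]
        · rw [he, hf, if_pos rfl, mul_one]
        · intro a _ ha
          rw [he, if_neg ha, mul_zero, zero_mul]
        · intro h'; exact absurd (Finset.mem_univ _) h'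
      rw [Finset.sum_congr rfl fun s _ => step1 s]
      have step2 : ∀ s : S, stateDist ρ P πE h s * (if s' = f h s (e h s) then 1 else 0)
          = ∑ s0 : S, ρ s0 * ((if s = g h s0 then 1 else 0)
              * (if s' = f h s (e h s) then 1 else 0)) := by
        intro s
        rw [ih s, Finset.sum_mul]
        exact Finset.sum_congr rfl fun s0 _ => by ring
      rw [Finset.sum_congr rfl fun s _ => step2 s, Finset.sum_comm]
      refine Finset.sum_congr rfl fun s0 _ => ?_
      rw [← Finset.mul_sum]
      congr 1
      rw [Finset.sum_eq_single (g h s0)]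
      · rw [if_pos rfl, one_mul, hgs]
      · intro s _ hs
        rw [if_neg hs, zero_mul]
      · intro h'; exact absurd (Finset.mem_univ _) h'
  -- m times BC prob of expert action equals m
  have hm_bc : ∀ h, h < H → ∀ s, m h s * bcPolicyD e D h s (e h s) = m h s := by
    intro h hh s
    by_cases hvis : ∃ tr ∈ D, (tr h).1 = s
    · rw [hbc_cov h s hvis, mul_one]
    · have hm0 : m h s = 0 := by
        rw [hmdef]
        refine Finset.sum_eq_zero fun s0 _ => ?_
        rw [if_neg, mul_zero]
        rintro ⟨⟨tr, htr, htr0⟩, hsg⟩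
        exact hvis ⟨tr, htr, by rw [factA tr htr h hh, htr0, ← hsg]⟩
      rw [hm0, zero_mul]
  -- m recursion (exact identity)
  have hm_rec : ∀ h s', (∑ s : S, m h s * (if s' = f h s (e h s) then 1 else 0)) = m (h + 1) s' := by
    intro h s'
    have expand : ∀ s : S, m h s * (if s' = f h s (e h s) then 1 else 0)
        = ∑ s0 : S, ρ s0 * ((if cov s0 ∧ s = g h s0 then 1 else 0)
            * (if s' = f h s (e h s) then 1 else 0)) := by
      intro s
      rw [hmdef, Finset.sum_mul]
      exact Finset.sum_congr rfl fun s0 _ => by ring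
    rw [Finset.sum_congr rfl fun s _ => expand s, Finset.sum_comm, hmdef]
    refine Finset.sum_congr rfl fun s0 _ => ?_
    rw [← Finset.mul_sum]
    congr 1
    rw [Finset.sum_eq_single (g h s0)]
    · by_cases hc : cov s0
      · rw [if_pos ⟨hc, rfl⟩, one_mul, hgs]
        by_cases hs' : s' = f h (g h s0) (e h (g h s0))
        · rw [if_pos hs', if_pos ⟨hc, hs'⟩]
        · rw [if_neg hs', if_neg (fun hx => hs' hx.2)]
      · rw [if_neg (fun hx => hc hx.1), zero_mul,
          if_neg (fun hx => hc hx.1)]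
    · intro s _ hs
      rw [if_neg (fun hx => hs hx.2), zero_mul]
    · intro h'; exact absurd (Finset.mem_univ _) h'
  -- Fact C : m lower bounds BC state distribution
  have factC : ∀ h, h < H → ∀ s, m h s ≤ stateDist ρ P (bcPolicyD e D) h s := by
    intro h
    induction h with
    | zero =>
      intro _ s
      show m 0 s ≤ ρ s
      calc m 0 s = ∑ s0 : S, (if s = s0 then ρ s0 * (if cov s0 then 1 else 0) else 0) := by
            rw [hmdef]
            refine Finset.sum_congr rfl fun s0 _ => ?_
            by_cases hs : s = s0
            · subst hs
              by_cases hc : cov s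
              · rw [if_pos ⟨hc, (hg0 s).symm⟩, if_pos rfl, if_pos hc]
              · rw [if_neg (fun hx => hc hx.1), if_pos rfl, if_neg hc, mul_zero]
            · rw [if_neg (fun hx => hs (hx.2.trans (hg0 s0))), if_neg hs, mul_zero]
        _ = ρ s * (if cov s then 1 else 0) := by rw [Finset.sum_ite_eq]; simp
        _ ≤ ρ s := by
            by_cases hc : cov s
            · rw [if_pos hc, mul_one]
            · rw [if_neg hc, mul_zero]; exact hρ.1 s
    | succ h ih =>
      intro hlt s'
      have hh : h < H := Nat.lt_of_succ_lt hlt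
      have key : (∑ s : S, m h s * bcPolicyD e D h s (e h s) * P h s (e h s) s')
          ≤ stateDist ρ P (bcPolicyD e D) (h + 1) s' := by
        show _ ≤ ∑ s : S, ∑ a : A, stateDist ρ P (bcPolicyD e D) h s
            * bcPolicyD e D h s a * P h s a s'
        refine Finset.sum_le_sum fun s _ => ?_
        have single : m h s * bcPolicyD e D h s (e h s) * P h s (e h s) s'
            ≤ stateDist ρ P (bcPolicyD e D) h s * bcPolicyD e D h s (e h s) * P h s (e h s) s' := by
          refine mul_le_mul_of_nonneg_right ?_ ((hP h s (e h s)).1 s')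
          exact mul_le_mul_of_nonneg_right (ih hh s) (hbc_nonneg h s (e h s))
        refine single.trans ?_
        refine Finset.single_le_sum (f := fun a => stateDist ρ P (bcPolicyD e D) h s
            * bcPolicyD e D h s a * P h s a s') (fun a _ => ?_) (Finset.mem_univ (e h s))
        exact mul_nonneg (mul_nonneg (hd_nonneg h s) (hbc_nonneg h s a)) ((hP h s a).1 s')
      calc m (h + 1) s' = ∑ s : S, m h s * (if s' = f h s (e h s) then 1 else 0) :=
            (hm_rec h s').symm
        _ = ∑ s : S, m h s * bcPolicyD e D h s (e h s) * P h s (e h s) s' := by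
            refine Finset.sum_congr rfl fun s _ => ?_
            rw [hm_bc h hh s, hf]
        _ ≤ _ := key
  -- per-step gap bound
  set C : ℝ := ∑ s : S, ρ s * (if cov s then 0 else 1) with hCdef
  have hmu : ∀ h s, stateDist ρ P πE h s = m h s + u h s := by
    intro h s
    rw [factE h s, hmdef, hudef, ← Finset.sum_add_distrib]
    refine Finset.sum_congr rfl fun s0 _ => ?_
    rw [← mul_add]
    congr 1
    by_cases hs : s = g h s0
    · by_cases hc : cov s0
      · rw [if_pos hs, if_pos ⟨hc, hs⟩, if_neg (fun hx => hx.1 hc)]; norm_num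
      · rw [if_pos hs, if_neg (fun hx => hc hx.1), if_pos ⟨hc, hs⟩]; norm_num
    · rw [if_neg hs, if_neg (fun hx => hs hx.2), if_neg (fun hx => hs hx.2)]; norm_num
  have per_h : ∀ h, h < H →
      (∑ s : S, ∑ a : A, saDist ρ P πE h s a * r h s a)
        - (∑ s : S, ∑ a : A, saDist ρ P (bcPolicyD e D) h s a * r h s a) ≤ C := by
    intro h hh
    have hEsum : (∑ s : S, ∑ a : A, saDist ρ P πE h s a * r h s a)
        = ∑ s : S, stateDist ρ P πE h s * r h s (e h s) := by
      refine Finset.sum_congr rfl fun s _ => ?_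
      rw [Finset.sum_eq_single (e h s)]
      · unfold saDist; rw [he, if_pos rfl, mul_one]
      · intro a _ ha
        unfold saDist; rw [he, if_neg ha, mul_zero, zero_mul]
      · intro h'; exact absurd (Finset.mem_univ _) h'
    have hBsum : (∑ s : S, m h s * r h s (e h s))
        ≤ ∑ s : S, ∑ a : A, saDist ρ P (bcPolicyD e D) h s a * r h s a := by
      refine Finset.sum_le_sum fun s _ => ?_
      have h1 : m h s * r h s (e h s)
          = m h s * bcPolicyD e D h s (e h s) * r h s (e h s) := by
        rw [hm_bc h hh s]
      have h2 : m h s * bcPolicyD e D h s (e h s) * r h s (e h s)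
          ≤ saDist ρ P (bcPolicyD e D) h s (e h s) * r h s (e h s) := by
        refine mul_le_mul_of_nonneg_right ?_ (hr h s (e h s)).1
        exact mul_le_mul_of_nonneg_right (factC h hh s) (hbc_nonneg h s (e h s))
      refine h1.trans_le (h2.trans ?_)
      refine Finset.single_le_sum (f := fun a => saDist ρ P (bcPolicyD e D) h s a * r h s a)
        (fun a _ => ?_) (Finset.mem_univ (e h s))
      exact mul_nonneg (mul_nonneg (hd_nonneg h s) (hbc_nonneg h s a)) (hr h s a).1
    have husum : (∑ s : S, u h s * r h s (e h s)) ≤ C := by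
      have step1 : (∑ s : S, u h s * r h s (e h s)) ≤ ∑ s : S, u h s := by
        refine Finset.sum_le_sum fun s _ => ?_
        calc u h s * r h s (e h s) ≤ u h s * 1 :=
              mul_le_mul_of_nonneg_left (hr h s (e h s)).2 (hu_nonneg h s)
          _ = u h s := mul_one _
      refine step1.trans ?_
      rw [hudef, hCdef, Finset.sum_comm]
      refine le_of_eq (Finset.sum_congr rfl fun s0 _ => ?_)
      rw [← Finset.mul_sum]
      congr 1
      by_cases hc : cov s0
      · rw [if_pos hc]
        refine Finset.sum_eq_zero fun s _ => by rw [if_neg (fun hx => hx.1 hc)]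
      · rw [if_neg hc, Finset.sum_eq_single (g h s0)]
        · rw [if_pos ⟨hc, rfl⟩]
        · intro s _ hs; rw [if_neg (fun hx => hs hx.2)]
        · intro h'; exact absurd (Finset.mem_univ _) h'
    calc (∑ s : S, ∑ a : A, saDist ρ P πE h s a * r h s a)
          - (∑ s : S, ∑ a : A, saDist ρ P (bcPolicyD e D) h s a * r h s a)
        ≤ (∑ s : S, stateDist ρ P πE h s * r h s (e h s)) - ∑ s : S, m h s * r h s (e h s) := by
          rw [hEsum]; linarith [hBsum]
      _ = ∑ s : S, u h s * r h s (e h s) := by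
          rw [← Finset.sum_sub_distrib]
          refine Finset.sum_congr rfl fun s _ => ?_
          rw [hmu h s]; ring
      _ ≤ C := husum
  -- assemble
  have main : policyValue ρ P πE r H - policyValue ρ P (bcPolicyD e D) r H ≤ H * C := by
    unfold policyValue
    rw [← Finset.sum_sub_distrib]
    calc (∑ h ∈ Finset.range H, ((∑ s : S, ∑ a : A, saDist ρ P πE h s a * r h s a)
            - ∑ s : S, ∑ a : A, saDist ρ P (bcPolicyD e D) h s a * r h s a))
        ≤ ∑ h ∈ Finset.range H, C := by
          refine Finset.sum_le_sum fun h hh => per_h h (Finset.mem_range.mp hh)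
      _ = H * C := by rw [Finset.sum_const, Finset.card_range, nsmul_eq_mul]
  refine main.trans (le_of_eq ?_)
  congr 1
end

section
/- Let S be a finite nonempty set, let p : S → ℝ satisfy p(s) ≥ 0 for all s and Σ_{s∈S} p(s) = 1, and let m ≥ 1 be an integer. Then Σ_{s∈S} p(s)·(1 − p(s))^m ≤ |S|/(e·m), where e is Euler's number. (In particular, the expected missing mass of m i.i.d. samples from p is at most |S|/(e·m).) -/
lemma key_bound (m : ℕ) (hm : 1 ≤ m) (x : ℝ) (hx0 : 0 ≤ x) (hx1 : x ≤ 1) :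
    x * (1 - x) ^ m ≤ 1 / (Real.exp 1 * m) := by
  have hm0 : (0:ℝ) < m := by exact_mod_cast hm
  have h1 : (1 - x) ^ m ≤ Real.exp (-(m * x)) := by
    have h : 1 - x ≤ Real.exp (-x) := by
      have := Real.add_one_le_exp (-x); linarith
    calc (1 - x) ^ m ≤ Real.exp (-x) ^ m := by
          exact pow_le_pow_left₀ (by linarith) h m
      _ = Real.exp (-(m * x)) := by
          rw [← Real.exp_nat_mul]; ring_nf
  have h2 : x * (1 - x) ^ m ≤ x * Real.exp (-(m * x)) :=
    mul_le_mul_of_nonneg_left h1 hx0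
  have h3 : x * Real.exp (-(m * x)) ≤ 1 / (Real.exp 1 * m) := by
    set t : ℝ := m * x with ht
    have ht0 : 0 ≤ t := mul_nonneg hm0.le hx0
    have hkey : t * Real.exp (-t) ≤ 1 / Real.exp 1 := by
      have h4 : t ≤ Real.exp (t - 1) := by
        have := Real.add_one_le_exp (t - 1); linarith
      have h5 : t * Real.exp (-t) ≤ Real.exp (t - 1) * Real.exp (-t) :=
        mul_le_mul_of_nonneg_right h4 (Real.exp_pos _).le
      calc t * Real.exp (-t) ≤ Real.exp (t - 1) * Real.exp (-t) := h5
        _ = Real.exp (-1) := by rw [← Real.exp_add]; ring_nf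
        _ = 1 / Real.exp 1 := by rw [Real.exp_neg]; ring
    have hx' : x * Real.exp (-t) = (t * Real.exp (-t)) / m := by
      field_simp [ht]; ring
    rw [hx', div_le_div_iff₀ hm0 (by positivity)]
    calc t * Real.exp (-t) * (Real.exp 1 * m)
        = (t * Real.exp (-t)) * Real.exp 1 * m := by ring
      _ ≤ (1 / Real.exp 1) * Real.exp 1 * m := by
          have := mul_le_mul_of_nonneg_right (mul_le_mul_of_nonneg_right hkey (Real.exp_pos 1).le) hm0.le
          linarith
      _ = 1 * m := by field_simp
  linarith

/-- for any probability vector `p` on a finite nonempty set `S` and any `m ≥ 1`,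
the expected missing mass of `m` i.i.d. samples from `p`, namely
`Σ_s p(s) (1 − p(s))^m`, is at most `|S| / (e m)`. -/
theorem expected_missing_mass_le {S : Type*} [Fintype S] [Nonempty S]
    (p : S → ℝ) (hp : ∀ s, 0 ≤ p s) (hsum : (∑ s : S, p s) = 1)
    (m : ℕ) (hm : 1 ≤ m) :
    (∑ s : S, p s * (1 - p s) ^ m) ≤ (Fintype.card S : ℝ) / (Real.exp 1 * m) := by
  have hle1 : ∀ s, p s ≤ 1 := by
    intro s
    rw [← hsum]
    exact Finset.single_le_sum (fun i _ => hp i) (Finset.mem_univ s)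
  calc (∑ s : S, p s * (1 - p s) ^ m)
      ≤ ∑ _s : S, 1 / (Real.exp 1 * m) :=
        Finset.sum_le_sum (fun s _ => key_bound m hm (p s) (hp s) (hle1 s))
    _ = (Fintype.card S : ℝ) / (Real.exp 1 * m) := by
        rw [Finset.sum_const, Finset.card_univ, nsmul_eq_mul, mul_one_div]
end

section
/- Let M satisfy the Reset Cliff assumption and let (P̂_h)_{h=1}^H be admissible estimates. If π^{AIL} is any global minimizer of the VAIL objective L(π) = Σ_{h=1}^H Σ_{(s,a)} |P^π_h(s,a) − P̂_h(s,a)|, then the policy value gap is controlled by the estimation error in the last time step only: |V^{π^E} − V^{π^{AIL}}| ≤ 2 Σ_{s∈S} |P̂_H(s,a¹) − d^{π^E}_H(s)|, where d^{π^E}_H is the state distribution of the expert policy at time H. -/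
open Finset

/-- The Reset Cliff assumption: good states `G` (with bad states `Gᶜ`), expert action `a1`. -/
def ResetCliff {S A : Type*} [Fintype S] [Fintype A] [DecidableEq S]
    (ρ : S → ℝ) (P : ℕ → S → A → S → ℝ) (r : ℕ → S → A → ℝ)
    (G : Finset S) (a1 : A) : Prop :=
  G.Nonempty ∧
  (∀ (h : ℕ), ∀ s ∈ G, r h s a1 = 1) ∧
  (∀ (h : ℕ) (s : S) (a : A), (s ∉ G ∨ a ≠ a1) → r h s a = 0) ∧
  (∀ (h : ℕ), ∀ s ∈ G, (∑ s' ∈ G, P h s a1 s') = 1) ∧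
  (∀ (h : ℕ), ∀ s ∈ G, ∀ s' ∈ G, 0 < P h s a1 s') ∧
  (∀ (h : ℕ), ∀ s ∈ G, ∀ a : A, a ≠ a1 → (∑ s' ∈ Gᶜ, P h s a s') = 1) ∧
  (∀ (h : ℕ), ∀ s ∉ G, ∀ a : A, (∑ s' ∈ Gᶜ, P h s a s') = 1) ∧
  (∀ s ∈ G, 0 < ρ s) ∧
  (∀ s ∉ G, ρ s = 0)

/-- Admissible estimates for the expert state-action distributions on a Reset Cliff instance. -/
def AdmissibleEst {S A : Type*} [Fintype S] [DecidableEq S]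
    (G : Finset S) (a1 : A) (Q : ℕ → S → A → ℝ) (H : ℕ) : Prop :=
  ∀ h < H, (∀ s a, 0 ≤ Q h s a) ∧
    (∀ (s : S) (a : A), (s ∉ G ∨ a ≠ a1) → Q h s a = 0) ∧
    (∑ s ∈ G, Q h s a1) = 1

/-- on any Reset Cliff instance with admissible estimates, the policy value gap
of any global minimizer `πAIL` of the VAIL objective is controlled by the estimation error in
the last time step only:
`|V^{πE} − V^{πAIL}| ≤ 2 Σ_s |P̂_H(s,a¹) − d^{πE}_H(s)|`
(the last time step is `H − 1` since time steps are 0-indexed). -/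
theorem vail_minimizer_gap_last_step_error {S A : Type*} [Fintype S] [Fintype A]
    [Nonempty S] [Nonempty A] [DecidableEq S]
    (ρ : S → ℝ) (P : ℕ → S → A → S → ℝ) (r : ℕ → S → A → ℝ)
    (πE πAIL : ℕ → S → A → ℝ) (G : Finset S) (a1 : A)
    (Q : ℕ → S → A → ℝ) (H : ℕ) (hH : 1 ≤ H)
    (hρ : IsInitDist ρ) (hP : IsTransition P) (hr : IsReward r)
    (hE : IsPolicy πE) (hAILpol : IsPolicy πAIL)
    (hRC : ResetCliff ρ P r G a1)
    (hEa : ∀ h s, πE h s a1 = 1)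
    (hQ : AdmissibleEst G a1 Q H)
    (hmin : ∀ π, IsPolicy π → vailLoss ρ P πAIL Q H ≤ vailLoss ρ P π Q H) :
    |policyValue ρ P πE r H - policyValue ρ P πAIL r H|
      ≤ 2 * ∑ s : S, |Q (H - 1) s a1 - stateDist ρ P πE (H - 1) s| := by
  classical
  obtain ⟨hGne, hr1, hr0, hPG, hPpos, hPbadA, hPbadS, hρpos, hρ0⟩ := hRC
  -- basic facts about policies
  have hpol_le_one : ∀ (π : ℕ → S → A → ℝ), IsPolicy π → ∀ h s a, π h s a ≤ 1 := by
    intro π hπ h s a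
    calc π h s a ≤ ∑ a' : A, π h s a' :=
          Finset.single_le_sum (fun a' _ => (hπ h s).1 a') (Finset.mem_univ a)
      _ = 1 := (hπ h s).2
  -- state distributions are nonnegative and sum to one
  have hd_nonneg : ∀ (π : ℕ → S → A → ℝ), IsPolicy π → ∀ h s, 0 ≤ stateDist ρ P π h s := by
    intro π hπ h
    induction h with
    | zero => exact hρ.1
    | succ h ih =>
      intro s'
      simp only [stateDist]
      refine Finset.sum_nonneg fun s _ => Finset.sum_nonneg fun a _ => ?_
      exact mul_nonneg (mul_nonneg (ih s) ((hπ h s).1 a)) ((hP h s a).1 s')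
  have hd_sum : ∀ (π : ℕ → S → A → ℝ), IsPolicy π → ∀ h, ∑ s : S, stateDist ρ P π h s = 1 := by
    intro π hπ h
    induction h with
    | zero => exact hρ.2
    | succ h ih =>
      simp only [stateDist]
      rw [Finset.sum_comm]
      have key : ∀ s : S,
          (∑ s' : S, ∑ a : A, stateDist ρ P π h s * π h s a * P h s a s')
            = stateDist ρ P π h s := by
        intro s
        rw [Finset.sum_comm]
        have h1 : ∀ a : A,
            (∑ s' : S, stateDist ρ P π h s * π h s a * P h s a s')
              = stateDist ρ P π h s * π h s a := by
          intro a
          rw [← Finset.mul_sum, (hP h s a).2, mul_one]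
        rw [Finset.sum_congr rfl fun a _ => h1 a, ← Finset.mul_sum, (hπ h s).2, mul_one]
      rw [Finset.sum_congr rfl fun s _ => key s]
      exact ih
  -- the expert plays only a1
  have hπE0 : ∀ h s a, a ≠ a1 → πE h s a = 0 := by
    intro h s a ha
    have hsplit : πE h s a1 + ∑ a' ∈ Finset.univ.erase a1, πE h s a' = 1 := by
      rw [Finset.add_sum_erase _ _ (Finset.mem_univ a1)]; exact (hE h s).2
    have hz : ∑ a' ∈ Finset.univ.erase a1, πE h s a' = 0 := by
      have := hEa h s; linarith
    exact (Finset.sum_eq_zero_iff_of_nonneg fun a' _ => (hE h s).1 a').1 hz a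
      (Finset.mem_erase.2 ⟨ha, Finset.mem_univ a⟩)
  -- transitions into good states are possible only from good states via a1
  have hP0 : ∀ h s a s', s' ∈ G → (s ∉ G ∨ a ≠ a1) → P h s a s' = 0 := by
    intro h s a s' hs' hbad
    have hGc : ∑ t ∈ Gᶜ, P h s a t = 1 := by
      rcases hbad with hs | ha
      · exact hPbadS h s hs a
      · by_cases hsG : s ∈ G
        · exact hPbadA h s hsG a ha
        · exact hPbadS h s hsG a
    have hGz : ∑ t ∈ G, P h s a t = 0 := by
      have hsp := Finset.sum_add_sum_compl G (P h s a)
      rw [hGc, (hP h s a).2] at hsp; linarith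
    exact (Finset.sum_eq_zero_iff_of_nonneg fun t _ => (hP h s a).1 t).1 hGz s' hs'
  -- a1 from a good state never leaves G
  have hPa1G : ∀ h s, s ∈ G → ∀ s', s' ∉ G → P h s a1 s' = 0 := by
    intro h s hs s' hs'
    have hGz : ∑ t ∈ Gᶜ, P h s a1 t = 0 := by
      have hsp := Finset.sum_add_sum_compl G (P h s a1)
      rw [hPG h s hs, (hP h s a1).2] at hsp; linarith
    exact (Finset.sum_eq_zero_iff_of_nonneg fun t _ => (hP h s a1).1 t).1 hGz s'
      (Finset.mem_compl.2 hs')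
  -- recursion for state distribution on good states
  have hrec : ∀ (π : ℕ → S → A → ℝ) (h : ℕ) (s' : S), s' ∈ G →
      stateDist ρ P π (h+1) s' = ∑ s ∈ G, stateDist ρ P π h s * π h s a1 * P h s a1 s' := by
    intro π h s' hs'
    simp only [stateDist]
    rw [← Finset.sum_subset (Finset.subset_univ G) (fun s _ hs => ?_)]
    · refine Finset.sum_congr rfl fun s _ => ?_
      refine Finset.sum_eq_single a1 (fun a _ ha => ?_) (fun ha => absurd (Finset.mem_univ a1) ha)
      rw [hP0 h s a s' hs' (Or.inr ha), mul_zero]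
    · refine Finset.sum_eq_zero fun a _ => ?_
      rw [hP0 h s a s' hs' (Or.inl hs), mul_zero]
  -- the expert stays in G
  have hdE_bad : ∀ h s, s ∉ G → stateDist ρ P πE h s = 0 := by
    intro h
    induction h with
    | zero => exact fun s hs => hρ0 s hs
    | succ h ih =>
      intro s' hs'
      simp only [stateDist]
      refine Finset.sum_eq_zero fun s _ => Finset.sum_eq_zero fun a _ => ?_
      by_cases hsG : s ∈ G
      · by_cases ha : a = a1
        · subst ha; rw [hPa1G h s hsG s' hs', mul_zero]
        · rw [hπE0 h s a ha, mul_zero, zero_mul]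
      · rw [ih s hsG, zero_mul, zero_mul]
  have hdE_sumG : ∀ h, ∑ s ∈ G, stateDist ρ P πE h s = 1 := by
    intro h
    rw [Finset.sum_subset (Finset.subset_univ G) (fun s _ hs => hdE_bad h s hs)]
    exact hd_sum πE hE h
  -- the expert dominates any policy on good states
  have hdom : ∀ (π : ℕ → S → A → ℝ), IsPolicy π → ∀ h, ∀ s ∈ G,
      stateDist ρ P π h s ≤ stateDist ρ P πE h s := by
    intro π hπ h
    induction h with
    | zero => exact fun s _ => le_refl _
    | succ h ih =>
      intro s' hs'
      rw [hrec π h s' hs', hrec πE h s' hs']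
      refine Finset.sum_le_sum fun s hs => ?_
      refine mul_le_mul_of_nonneg_right ?_ ((hP h s a1).1 s')
      rw [hEa h s, mul_one]
      calc stateDist ρ P π h s * π h s a1 ≤ stateDist ρ P π h s * 1 :=
            mul_le_mul_of_nonneg_left (hpol_le_one π hπ h s a1) (hd_nonneg π hπ h s)
        _ = stateDist ρ P π h s := mul_one _
        _ ≤ stateDist ρ P πE h s := ih s hs
  -- state-action distribution facts
  have hsa_nonneg : ∀ (π : ℕ → S → A → ℝ), IsPolicy π → ∀ h s a, 0 ≤ saDist ρ P π h s a :=
    fun π hπ h s a => mul_nonneg (hd_nonneg π hπ h s) ((hπ h s).1 a)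
  have hsa_le_d : ∀ (π : ℕ → S → A → ℝ), IsPolicy π → ∀ h s,
      saDist ρ P π h s a1 ≤ stateDist ρ P π h s := by
    intro π hπ h s
    calc saDist ρ P π h s a1 = stateDist ρ P π h s * π h s a1 := rfl
      _ ≤ stateDist ρ P π h s * 1 :=
          mul_le_mul_of_nonneg_left (hpol_le_one π hπ h s a1) (hd_nonneg π hπ h s)
      _ = stateDist ρ P π h s := mul_one _
  have hsa_le_dE : ∀ (π : ℕ → S → A → ℝ), IsPolicy π → ∀ h, ∀ s ∈ G,
      saDist ρ P π h s a1 ≤ stateDist ρ P πE h s :=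
    fun π hπ h s hs => le_trans (hsa_le_d π hπ h s) (hdom π hπ h s hs)
  have hsa_total : ∀ (π : ℕ → S → A → ℝ), IsPolicy π → ∀ h,
      ∑ s : S, ∑ a : A, saDist ρ P π h s a = 1 := by
    intro π hπ h
    have key : ∀ s : S, ∑ a : A, saDist ρ P π h s a = stateDist ρ P π h s := by
      intro s
      simp only [saDist]
      rw [← Finset.mul_sum, (hπ h s).2, mul_one]
    rw [Finset.sum_congr rfl fun s _ => key s]
    exact hd_sum π hπ h
  -- value formula
  have hval : ∀ (π : ℕ → S → A → ℝ), IsPolicy π →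
      policyValue ρ P π r H = ∑ h ∈ Finset.range H, ∑ s ∈ G, saDist ρ P π h s a1 := by
    intro π hπ
    refine Finset.sum_congr rfl fun h _ => ?_
    calc ∑ s : S, ∑ a : A, saDist ρ P π h s a * r h s a
        = ∑ s ∈ G, ∑ a : A, saDist ρ P π h s a * r h s a := by
          symm
          refine Finset.sum_subset (Finset.subset_univ G) fun s _ hs => ?_
          exact Finset.sum_eq_zero fun a _ => by rw [hr0 h s a (Or.inl hs), mul_zero]
      _ = ∑ s ∈ G, saDist ρ P π h s a1 := by
          refine Finset.sum_congr rfl fun s hs => ?_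
          rw [Finset.sum_eq_single a1 (fun a _ ha => by rw [hr0 h s a (Or.inr ha), mul_zero])
            (fun ha => absurd (Finset.mem_univ a1) ha), hr1 h s hs, mul_one]
  have hsaE : ∀ h s, saDist ρ P πE h s a1 = stateDist ρ P πE h s := by
    intro h s
    simp only [saDist]
    rw [hEa h s, mul_one]
  have hvalE : policyValue ρ P πE r H = H := by
    rw [hval πE hE]
    have key : ∀ h, ∑ s ∈ G, saDist ρ P πE h s a1 = 1 := by
      intro h
      rw [Finset.sum_congr rfl fun s _ => hsaE h s]
      exact hdE_sumG h
    rw [Finset.sum_congr rfl fun h _ => key h, Finset.sum_const, Finset.card_range,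
      nsmul_eq_mul, mul_one]
  -- loss decomposition
  have hloss_dec : ∀ (π : ℕ → S → A → ℝ), IsPolicy π → ∀ h, h < H →
      (∑ s : S, ∑ a : A, |saDist ρ P π h s a - Q h s a|)
        = (∑ s ∈ G, |saDist ρ P π h s a1 - Q h s a1|)
          + (1 - ∑ s ∈ G, saDist ρ P π h s a1) := by
    intro π hπ h hh
    obtain ⟨hQnn, hQoff, hQsum⟩ := hQ h hh
    have hsplit_a : ∀ s : S, ∑ a : A, |saDist ρ P π h s a - Q h s a|
        = |saDist ρ P π h s a1 - Q h s a1| + ∑ a ∈ Finset.univ.erase a1, saDist ρ P π h s a := by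
      intro s
      rw [← Finset.add_sum_erase _ _ (Finset.mem_univ a1)]
      congr 1
      refine Finset.sum_congr rfl fun a ha => ?_
      rw [hQoff s a (Or.inr (Finset.mem_erase.1 ha).1), sub_zero,
        abs_of_nonneg (hsa_nonneg π hπ h s a)]
    have hsplit_s : ∑ s : S, |saDist ρ P π h s a1 - Q h s a1|
        = (∑ s ∈ G, |saDist ρ P π h s a1 - Q h s a1|) + ∑ s ∈ Gᶜ, saDist ρ P π h s a1 := by
      rw [← Finset.sum_add_sum_compl G]
      congr 1
      refine Finset.sum_congr rfl fun s hs => ?_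
      rw [hQoff s a1 (Or.inl (Finset.mem_compl.1 hs)), sub_zero,
        abs_of_nonneg (hsa_nonneg π hπ h s a1)]
    have htot : (∑ s ∈ G, saDist ρ P π h s a1)
        + ((∑ s ∈ Gᶜ, saDist ρ P π h s a1)
          + ∑ s : S, ∑ a ∈ Finset.univ.erase a1, saDist ρ P π h s a) = 1 := by
      have h1 : ∀ s : S, ∑ a : A, saDist ρ P π h s a
          = saDist ρ P π h s a1 + ∑ a ∈ Finset.univ.erase a1, saDist ρ P π h s a :=
        fun s => (Finset.add_sum_erase _ _ (Finset.mem_univ a1)).symm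
      have h2 := hsa_total π hπ h
      rw [Finset.sum_congr rfl fun s _ => h1 s, Finset.sum_add_distrib,
        ← Finset.sum_add_sum_compl G (fun s => saDist ρ P π h s a1)] at h2
      linarith
    calc ∑ s : S, ∑ a : A, |saDist ρ P π h s a - Q h s a|
        = (∑ s : S, |saDist ρ P π h s a1 - Q h s a1|)
          + ∑ s : S, ∑ a ∈ Finset.univ.erase a1, saDist ρ P π h s a := by
          rw [Finset.sum_congr rfl fun s _ => hsplit_a s, Finset.sum_add_distrib]
      _ = (∑ s ∈ G, |saDist ρ P π h s a1 - Q h s a1|)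
          + ((∑ s ∈ Gᶜ, saDist ρ P π h s a1)
            + ∑ s : S, ∑ a ∈ Finset.univ.erase a1, saDist ρ P π h s a) := by
          rw [hsplit_s]; ring
      _ = (∑ s ∈ G, |saDist ρ P π h s a1 - Q h s a1|)
          + (1 - ∑ s ∈ G, saDist ρ P π h s a1) := by linarith
  -- per-step expert estimation error
  -- ε h = ∑_{s ∈ G} |Q h s a1 - d^E_h s|
  have hloss_ge : ∀ h, h < H →
      (∑ s ∈ G, |Q h s a1 - stateDist ρ P πE h s|)
        ≤ (∑ s ∈ G, |saDist ρ P πAIL h s a1 - Q h s a1|)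
          + (1 - ∑ s ∈ G, saDist ρ P πAIL h s a1) := by
    intro h _
    have hdiff : ∑ s ∈ G, (stateDist ρ P πE h s - saDist ρ P πAIL h s a1)
        = 1 - ∑ s ∈ G, saDist ρ P πAIL h s a1 := by
      rw [Finset.sum_sub_distrib, hdE_sumG h]
    have hpt : ∀ s ∈ G, |Q h s a1 - stateDist ρ P πE h s|
        ≤ |saDist ρ P πAIL h s a1 - Q h s a1|
          + (stateDist ρ P πE h s - saDist ρ P πAIL h s a1) := by
      intro s hs
      have hle := hsa_le_dE πAIL hAILpol h s hs
      have habs : |Q h s a1 - stateDist ρ P πE h s|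
          ≤ |Q h s a1 - saDist ρ P πAIL h s a1|
            + |saDist ρ P πAIL h s a1 - stateDist ρ P πE h s| := abs_sub_le _ _ _
      rw [abs_of_nonpos (by linarith : saDist ρ P πAIL h s a1 - stateDist ρ P πE h s ≤ 0)] at habs
      have e1 : |Q h s a1 - stateDist ρ P πE h s| = |stateDist ρ P πE h s - Q h s a1| :=
        abs_sub_comm _ _
      have e2 : |saDist ρ P πAIL h s a1 - Q h s a1| = |Q h s a1 - saDist ρ P πAIL h s a1| :=
        abs_sub_comm _ _
      linarith
    calc ∑ s ∈ G, |Q h s a1 - stateDist ρ P πE h s|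
        ≤ ∑ s ∈ G, (|saDist ρ P πAIL h s a1 - Q h s a1|
            + (stateDist ρ P πE h s - saDist ρ P πAIL h s a1)) := Finset.sum_le_sum hpt
      _ = (∑ s ∈ G, |saDist ρ P πAIL h s a1 - Q h s a1|)
          + (1 - ∑ s ∈ G, saDist ρ P πAIL h s a1) := by
          rw [Finset.sum_add_distrib, hdiff]
  -- the expert's loss is exactly ∑ ε h
  have hLE : vailLoss ρ P πE Q H
      = ∑ h ∈ Finset.range H, ∑ s ∈ G, |Q h s a1 - stateDist ρ P πE h s| := by
    refine Finset.sum_congr rfl fun h hh => ?_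
    rw [hloss_dec πE hE h (Finset.mem_range.1 hh)]
    have h1 : ∑ s ∈ G, saDist ρ P πE h s a1 = 1 := by
      rw [Finset.sum_congr rfl fun s _ => hsaE h s]; exact hdE_sumG h
    rw [h1]
    have h2 : ∀ s ∈ G, |saDist ρ P πE h s a1 - Q h s a1| = |Q h s a1 - stateDist ρ P πE h s| := by
      intro s _
      rw [hsaE h s, abs_sub_comm]
    rw [Finset.sum_congr rfl h2]
    ring
  -- each step loss of the minimizer equals ε h
  have hlosseq : ∀ h ∈ Finset.range H,
      (∑ s : S, ∑ a : A, |saDist ρ P πAIL h s a - Q h s a|)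
        = ∑ s ∈ G, |Q h s a1 - stateDist ρ P πE h s| := by
    have hterm : ∀ h ∈ Finset.range H,
        (∑ s ∈ G, |Q h s a1 - stateDist ρ P πE h s|)
          ≤ ∑ s : S, ∑ a : A, |saDist ρ P πAIL h s a - Q h s a| := by
      intro h hh
      rw [hloss_dec πAIL hAILpol h (Finset.mem_range.1 hh)]
      exact hloss_ge h (Finset.mem_range.1 hh)
    have hsum : (∑ h ∈ Finset.range H, ∑ s : S, ∑ a : A, |saDist ρ P πAIL h s a - Q h s a|)
        ≤ ∑ h ∈ Finset.range H, ∑ s ∈ G, |Q h s a1 - stateDist ρ P πE h s| := by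
      have := hmin πE hE
      rw [hLE] at this
      exact this
    have heq : (∑ h ∈ Finset.range H, ∑ s ∈ G, |Q h s a1 - stateDist ρ P πE h s|)
        = ∑ h ∈ Finset.range H, ∑ s : S, ∑ a : A, |saDist ρ P πAIL h s a - Q h s a| :=
      le_antisymm (Finset.sum_le_sum hterm) hsum
    intro h hh
    exact ((Finset.sum_eq_sum_iff_of_le hterm).1 heq h hh).symm
  -- the minimizer keeps all mass in G before the final step
  have hm_le_one : ∀ h, ∑ s ∈ G, saDist ρ P πAIL h s a1 ≤ 1 := by
    intro h
    calc ∑ s ∈ G, saDist ρ P πAIL h s a1 ≤ ∑ s ∈ G, stateDist ρ P πE h s :=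
          Finset.sum_le_sum fun s hs => hsa_le_dE πAIL hAILpol h s hs
      _ = 1 := hdE_sumG h
  have hm1 : ∀ h, h + 1 < H → ∑ s ∈ G, saDist ρ P πAIL h s a1 = 1 := by
    intro h hh1
    by_contra hne
    have hmlt : ∑ s ∈ G, saDist ρ P πAIL h s a1 < 1 := lt_of_le_of_ne (hm_le_one h) hne
    -- some good state has a strict deficit at step h
    obtain ⟨s0, hs0G, hs0⟩ : ∃ s0 ∈ G, saDist ρ P πAIL h s0 a1 < stateDist ρ P πE h s0 := by
      by_contra hc
      push_neg at hc
      have : ∑ s ∈ G, stateDist ρ P πE h s ≤ ∑ s ∈ G, saDist ρ P πAIL h s a1 :=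
        Finset.sum_le_sum fun s hs => hc s hs
      rw [hdE_sumG h] at this
      linarith
    -- hence a strict pointwise deficit everywhere in G at step h+1
    have hkey : ∀ s' ∈ G, stateDist ρ P πAIL (h+1) s' < stateDist ρ P πE (h+1) s' := by
      intro s' hs'
      rw [hrec πAIL h s' hs', hrec πE h s' hs']
      refine Finset.sum_lt_sum (fun s hs => ?_) ⟨s0, hs0G, ?_⟩
      · refine mul_le_mul_of_nonneg_right ?_ ((hP h s a1).1 s')
        rw [hEa h s, mul_one]
        exact hsa_le_dE πAIL hAILpol h s hs
      · have hPp := hPpos h s0 hs0G s' hs'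
        rw [hEa h s0, mul_one]
        exact mul_lt_mul_of_pos_right hs0 hPp
    -- find a good state where the estimate is at least the expert mass at step h+1
    obtain ⟨hQnn, hQoff, hQsum⟩ := hQ (h+1) hh1
    obtain ⟨st, hstG, hst⟩ : ∃ s ∈ G, stateDist ρ P πE (h+1) s ≤ Q (h+1) s a1 := by
      by_contra hc
      push_neg at hc
      have : ∑ s ∈ G, Q (h+1) s a1 < ∑ s ∈ G, stateDist ρ P πE (h+1) s :=
        Finset.sum_lt_sum_of_nonempty hGne fun s hs => hc s hs
      rw [hQsum, hdE_sumG (h+1)] at this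
      exact lt_irrefl 1 this
    -- the step h+1 loss strictly exceeds ε (h+1): contradiction
    have hpt : ∀ s ∈ G, |Q (h+1) s a1 - stateDist ρ P πE (h+1) s|
        ≤ |saDist ρ P πAIL (h+1) s a1 - Q (h+1) s a1|
          + (stateDist ρ P πE (h+1) s - saDist ρ P πAIL (h+1) s a1) := by
      intro s hs
      have hle := hsa_le_dE πAIL hAILpol (h+1) s hs
      have habs : |Q (h+1) s a1 - stateDist ρ P πE (h+1) s|
          ≤ |Q (h+1) s a1 - saDist ρ P πAIL (h+1) s a1|
            + |saDist ρ P πAIL (h+1) s a1 - stateDist ρ P πE (h+1) s| := abs_sub_le _ _ _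
      rw [abs_of_nonpos (by linarith : saDist ρ P πAIL (h+1) s a1
          - stateDist ρ P πE (h+1) s ≤ 0)] at habs
      have e1 : |Q (h+1) s a1 - stateDist ρ P πE (h+1) s|
          = |stateDist ρ P πE (h+1) s - Q (h+1) s a1| := abs_sub_comm _ _
      have e2 : |saDist ρ P πAIL (h+1) s a1 - Q (h+1) s a1|
          = |Q (h+1) s a1 - saDist ρ P πAIL (h+1) s a1| := abs_sub_comm _ _
      linarith
    have hptst : |Q (h+1) st a1 - stateDist ρ P πE (h+1) st|
        < |saDist ρ P πAIL (h+1) st a1 - Q (h+1) st a1|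
          + (stateDist ρ P πE (h+1) st - saDist ρ P πAIL (h+1) st a1) := by
      have hlt : saDist ρ P πAIL (h+1) st a1 < stateDist ρ P πE (h+1) st :=
        lt_of_le_of_lt (hsa_le_d πAIL hAILpol (h+1) st) (hkey st hstG)
      rw [abs_of_nonneg (by linarith : (0:ℝ) ≤ Q (h+1) st a1 - stateDist ρ P πE (h+1) st),
        abs_of_nonpos (by linarith : saDist ρ P πAIL (h+1) st a1 - Q (h+1) st a1 ≤ 0)]
      linarith
    have hstrict : (∑ s ∈ G, |Q (h+1) s a1 - stateDist ρ P πE (h+1) s|)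
        < (∑ s ∈ G, |saDist ρ P πAIL (h+1) s a1 - Q (h+1) s a1|)
          + (1 - ∑ s ∈ G, saDist ρ P πAIL (h+1) s a1) := by
      have hdiff : ∑ s ∈ G, (stateDist ρ P πE (h+1) s - saDist ρ P πAIL (h+1) s a1)
          = 1 - ∑ s ∈ G, saDist ρ P πAIL (h+1) s a1 := by
        rw [Finset.sum_sub_distrib, hdE_sumG (h+1)]
      calc ∑ s ∈ G, |Q (h+1) s a1 - stateDist ρ P πE (h+1) s|
          < ∑ s ∈ G, (|saDist ρ P πAIL (h+1) s a1 - Q (h+1) s a1|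
              + (stateDist ρ P πE (h+1) s - saDist ρ P πAIL (h+1) s a1)) :=
            Finset.sum_lt_sum (fun s hs => hpt s hs) ⟨st, hstG, hptst⟩
        _ = (∑ s ∈ G, |saDist ρ P πAIL (h+1) s a1 - Q (h+1) s a1|)
            + (1 - ∑ s ∈ G, saDist ρ P πAIL (h+1) s a1) := by
            rw [Finset.sum_add_distrib, hdiff]
    have heq1 := hlosseq (h+1) (Finset.mem_range.2 hh1)
    rw [hloss_dec πAIL hAILpol (h+1) hh1] at heq1
    linarith
  -- final assembly
  have hH1 : H - 1 < H := by omega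
  have hgap : policyValue ρ P πE r H - policyValue ρ P πAIL r H
      = 1 - ∑ s ∈ G, saDist ρ P πAIL (H-1) s a1 := by
    rw [hvalE, hval πAIL hAILpol]
    have : (H : ℝ) - ∑ h ∈ Finset.range H, ∑ s ∈ G, saDist ρ P πAIL h s a1
        = ∑ h ∈ Finset.range H, (1 - ∑ s ∈ G, saDist ρ P πAIL h s a1) := by
      rw [Finset.sum_sub_distrib, Finset.sum_const, Finset.card_range, nsmul_eq_mul, mul_one]
    rw [this]
    refine Finset.sum_eq_single_of_mem (H-1) (Finset.mem_range.2 hH1) fun h hh hne => ?_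
    have : h + 1 < H := by
      have := Finset.mem_range.1 hh
      omega
    rw [hm1 h this]
    ring
  -- bound the last-step deficit by the last-step estimation error
  have hlast := hlosseq (H-1) (Finset.mem_range.2 hH1)
  rw [hloss_dec πAIL hAILpol (H-1) hH1] at hlast
  obtain ⟨hQnn, hQoff, hQsum⟩ := hQ (H-1) hH1
  have habs_sum : (1 - ∑ s ∈ G, saDist ρ P πAIL (H-1) s a1)
      ≤ ∑ s ∈ G, |saDist ρ P πAIL (H-1) s a1 - Q (H-1) s a1| := by
    calc 1 - ∑ s ∈ G, saDist ρ P πAIL (H-1) s a1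
        = |∑ s ∈ G, (Q (H-1) s a1 - saDist ρ P πAIL (H-1) s a1)| := by
          rw [Finset.sum_sub_distrib, hQsum]
          rw [abs_of_nonneg (by linarith [hm_le_one (H-1)])]
      _ ≤ ∑ s ∈ G, |Q (H-1) s a1 - saDist ρ P πAIL (H-1) s a1| :=
          Finset.abs_sum_le_sum_abs _ _
      _ = ∑ s ∈ G, |saDist ρ P πAIL (H-1) s a1 - Q (H-1) s a1| :=
          Finset.sum_congr rfl fun s _ => abs_sub_comm _ _
  have hεext : (∑ s : S, |Q (H-1) s a1 - stateDist ρ P πE (H-1) s|)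
      = ∑ s ∈ G, |Q (H-1) s a1 - stateDist ρ P πE (H-1) s| := by
    symm
    refine Finset.sum_subset (Finset.subset_univ G) fun s _ hs => ?_
    rw [hQoff s a1 (Or.inl hs), hdE_bad (H-1) s hs, sub_zero, abs_zero]
  have hεnn : (0:ℝ) ≤ ∑ s ∈ G, |Q (H-1) s a1 - stateDist ρ P πE (H-1) s| :=
    Finset.sum_nonneg fun s _ => abs_nonneg _
  rw [hgap, hεext]
  rw [abs_of_nonneg (by linarith [hm_le_one (H-1)])]
  linarith
end
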